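/- Let χ be a Dirichlet character of conductor f, N ≥ 1, and S_n = Σ_{a=1}^{f} χ(a) a^n. Then B_{N,n,χ} satisfies B_{N,0,χ} = S_0/f^N and, for n ≥ 1, B_{N,n,χ} = S_n/f^N - Σ_{i=0}^{n-1} (N!·n!·f^{n-i})/((N+n-i)!·i!) · B_{N,i,χ}. -/

import Mathlib

open PowerSeries Finset

noncomputable def eSer (c : ℂ) : PowerSeries ℂ := PowerSeries.mk fun n => c ^ n / n.factorial

noncomputable def dSer (N f : ℕ) : PowerSeries ℂ :=
  PowerSeries.mk fun m => (N.factorial : ℂ) * (f : ℂ) ^ m / (N + m).factorial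

noncomputable def hB (N n : ℕ) : ℂ :=
  n.factorial * PowerSeries.coeff n (dSer N 1)⁻¹

noncomputable def hBP (N n : ℕ) (x : ℂ) : ℂ :=
  n.factorial * PowerSeries.coeff n (eSer x * (dSer N 1)⁻¹)

noncomputable def gBP (N f : ℕ) (χ : DirichletCharacter ℂ f) (n : ℕ) (x : ℂ) : ℂ :=
  n.factorial * PowerSeries.coeff n
    (((f : ℂ) ^ N)⁻¹ • ((∑ a ∈ Finset.Icc 1 f, (PowerSeries.C (χ (a : ZMod f))) * eSer (x + a)) * (dSer N f)⁻¹))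

noncomputable def gB (N f : ℕ) (χ : DirichletCharacter ℂ f) (n : ℕ) : ℂ := gBP N f χ n 0

/-! The generating function of `gB N f χ` is `f⁻ᴺ · E / D` with `E = ∑ χ(a) e^{at}` and
`D = dSer N f`, the series `N! (e^{ft} - ∑_{k<N} (ft)^k/k!) / (ft)^N`, whose constant term is `1`.
Comparing coefficients of `t^n` in `(E / D) · D = E` expresses the `n`-th coefficient of `E / D`
through the earlier ones, which is the recurrence. -/

theorem PowerSeries.coeff_mul_inv_eq_sub_sum {k : Type*} [Field k] (E D : k⟦X⟧)
    (hD : constantCoeff D = 1) (n : ℕ) :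
    coeff n (E * D⁻¹) =
      coeff n E - ∑ i ∈ range n, coeff i (E * D⁻¹) * coeff (n - i) D := by
  have hE : E = E * D⁻¹ * D := by
    rw [mul_assoc, mul_comm D⁻¹, PowerSeries.mul_inv_cancel D (by simp [hD]), mul_one]
  have hE_coeff : coeff n E = ∑ i ∈ range (n + 1), coeff i (E * D⁻¹) * coeff (n - i) D := by
    conv_lhs => rw [hE]
    rw [coeff_mul, Nat.sum_antidiagonal_eq_sum_range_succ_mk]
  rw [hE_coeff, sum_range_succ, Nat.sub_self, coeff_zero_eq_constantCoeff_apply, hD]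
  ring

theorem coeff_eSer (c : ℂ) (n : ℕ) : coeff n (eSer c) = c ^ n / n.factorial :=
  coeff_mk _ _

theorem coeff_dSer (N f m : ℕ) :
    coeff m (dSer N f) = (N.factorial : ℂ) * (f : ℂ) ^ m / (N + m).factorial :=
  coeff_mk _ _

theorem constantCoeff_dSer (N f : ℕ) : constantCoeff (dSer N f) = 1 := by
  rw [← coeff_zero_eq_constantCoeff_apply, coeff_dSer]
  simp [Nat.factorial_ne_zero]

theorem coeff_sum_C_mul_eSer (f : ℕ) (χ : DirichletCharacter ℂ f) (n : ℕ) :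
    coeff n (∑ a ∈ Icc 1 f, C (χ (a : ZMod f)) * eSer a) =
      (∑ a ∈ Icc 1 f, χ (a : ZMod f) * (a : ℂ) ^ n) / n.factorial := by
  simp only [map_sum, coeff_C_mul, coeff_eSer, sum_div, mul_div_assoc]

theorem gB_eq_sub_sum (N f : ℕ) (χ : DirichletCharacter ℂ f) (n : ℕ) :
    gB N f χ n = (∑ a ∈ Icc 1 f, χ (a : ZMod f) * (a : ℂ) ^ n) / (f : ℂ) ^ N -
      ∑ i ∈ range n,
        ((N.factorial : ℂ) * (n.factorial : ℂ) * (f : ℂ) ^ (n - i)) /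
          (((N + n - i).factorial : ℂ) * (i.factorial : ℂ)) * gB N f χ i := by
  have hgB (m : ℕ) : gB N f χ m = m.factorial * (((f : ℂ) ^ N)⁻¹ *
      coeff m ((∑ a ∈ Icc 1 f, C (χ (a : ZMod f)) * eSer a) * (dSer N f)⁻¹)) := by
    simp only [gB, gBP, zero_add, map_smul, smul_eq_mul]
  have hfac (m : ℕ) : (m.factorial : ℂ) ≠ 0 := Nat.cast_ne_zero.2 m.factorial_ne_zero
  rw [hgB, coeff_mul_inv_eq_sub_sum _ _ (constantCoeff_dSer N f), coeff_sum_C_mul_eSer,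
    div_eq_mul_inv _ ((f : ℂ) ^ N), mul_sub, mul_sub, mul_sum, mul_sum]
  congr 1
  · field_simp [hfac n]
  · refine sum_congr rfl fun i hi => ?_
    rw [Nat.add_sub_assoc (mem_range.mp hi).le, coeff_dSer, hgB]
    field_simp [hfac i]

theorem stmt17_general (N f : ℕ) (χ : DirichletCharacter ℂ f) :
    gB N f χ 0 = (∑ a ∈ Finset.Icc 1 f, χ (a : ZMod f)) / (f : ℂ) ^ N ∧
    ∀ n : ℕ, 1 ≤ n →
      gB N f χ n = (∑ a ∈ Finset.Icc 1 f, χ (a : ZMod f) * (a : ℂ) ^ n) / (f : ℂ) ^ N -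
        ∑ i ∈ Finset.range n,
          ((N.factorial : ℂ) * (n.factorial : ℂ) * (f : ℂ) ^ (n - i)) /
            (((N + n - i).factorial : ℂ) * (i.factorial : ℂ)) * gB N f χ i :=
  ⟨by simpa using gB_eq_sub_sum N f χ 0, fun n _ => gB_eq_sub_sum N f χ n⟩

theorem stmt17 (N f : ℕ) (hN : 1 ≤ N) (hf : 0 < f) (χ : DirichletCharacter ℂ f)
    (hχ : χ.IsPrimitive) :
    gB N f χ 0 = (∑ a ∈ Finset.Icc 1 f, χ (a : ZMod f)) / (f : ℂ) ^ N ∧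
    ∀ n : ℕ, 1 ≤ n →
      gB N f χ n = (∑ a ∈ Finset.Icc 1 f, χ (a : ZMod f) * (a : ℂ) ^ n) / (f : ℂ) ^ N -
        ∑ i ∈ Finset.range n,
          ((N.factorial : ℂ) * (n.factorial : ℂ) * (f : ℂ) ^ (n - i)) /
            (((N + n - i).factorial : ℂ) * (i.factorial : ℂ)) * gB N f χ i :=
  stmt17_general N f χ
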